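/- For every t ≥ 0, there exist constants h_1(t), h_2(t) > 0 (depending only on the alphabet data, p, r, t) such that for every l ≥ 1, every σ ∈ Φ_l and every h ≥ 1: h_2(t) · E_r(σ)^t · I_{h,r}(t) ≤ Σ_{ρ∈Λ_h(σ)} E_r(ρ)^t ≤ h_1(t) · E_r(σ)^t · I_{h,r}(t). -/

import Mathlib

open Filter MeasureTheory
open scoped BigOperators ENNReal NNReal Topology

namespace LGQ

noncomputable section

/-- The alphabet `G = {(i,j) : 1 ≤ i ≤ n_j, 1 ≤ j ≤ m}`, encoded as a sigma type:
an element is `⟨j, i⟩` with `j : Fin m` (the `y`-coordinate) and `i : Fin (n j)`. -/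
abbrev Alph (m : ℕ) (n : Fin m → ℕ) := Σ j : Fin m, Fin (n j)

/-- A pair `σ = (σ_L, σ_R)` with `σ_L ∈ G^*` and `σ_R ∈ G_y^*`. -/
abbrev Wd (m : ℕ) (n : Fin m → ℕ) := List (Alph m n) × List (Fin m)

variable {m : ℕ} {n : Fin m → ℕ}

/-- `a_ω := ∏ a_{i_h j_h}` along a word `ω ∈ G^*`. -/
def aP (a : Alph m n → ℝ) (w : List (Alph m n)) : ℝ := (w.map a).prod

/-- `b_τ := ∏ b_{j_h}` along a word `τ ∈ G_y^*`. -/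
def bP (b : Fin m → ℝ) (τ : List (Fin m)) : ℝ := (τ.map b).prod

/-- `σ_y := (σ_L)_y ∗ σ_R` : the `y`-word of a pair `σ = σ_L ∗ σ_R`. -/
def sy (σ : Wd m n) : List (Fin m) := σ.1.map Sigma.fst ++ σ.2

/-- `Ψ_l := {σ = σ_L ∗ σ_R : σ_L ∈ G^l, σ_R ∈ G_y^*, b_{(σ_y)^-} ≥ a_{σ_L} > b_{σ_y}}`. -/
def Psi (a : Alph m n → ℝ) (b : Fin m → ℝ) (l : ℕ) : Set (Wd m n) :=
  {σ | σ.1.length = l ∧ 1 ≤ σ.2.length ∧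
    aP a σ.1 ≤ bP b (sy σ).dropLast ∧ bP b (sy σ) < aP a σ.1}

/-- `Ψ^* := ⋃_{l ≥ 1} Ψ_l`. -/
def PsiStar (a : Alph m n → ℝ) (b : Fin m → ℝ) : Set (Wd m n) :=
  {σ | ∃ l, 1 ≤ l ∧ σ ∈ Psi a b l}

/-- `q_j := Σ_{i=1}^{n_j} p_{ij}`. -/
def qf (p : Alph m n → ℝ) (j : Fin m) : ℝ := ∑ i : Fin (n j), p ⟨j, i⟩

/-- `p_{σ_L} := ∏ p_{i_h j_h}`. -/
def pP (p : Alph m n → ℝ) (w : List (Alph m n)) : ℝ := (w.map p).prod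

/-- `q_{σ_R} := ∏ q_{j_h}`. -/
def qP (p : Alph m n → ℝ) (τ : List (Fin m)) : ℝ := (τ.map (qf p)).prod

/-- `E_r(σ) := p_{σ_L} q_{σ_R} a_{σ_L}^r` (note `E_r(θ) = 1`). -/
def Er (a p : Alph m n → ℝ) (r : ℝ) (σ : Wd m n) : ℝ :=
  pP p σ.1 * qP p σ.2 * aP a σ.1 ^ r

/-- `a̲ := min a_{ij}`. -/
def aLo (a : Alph m n → ℝ) : ℝ := ⨅ g, a g

/-- `ā := max a_{ij}`. -/
def aHi (a : Alph m n → ℝ) : ℝ := ⨆ g, a g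

/-- `b̲ := min b_j`. -/
def bLo (b : Fin m → ℝ) : ℝ := ⨅ j, b j

/-- `b̄ := max b_j`. -/
def bHi (b : Fin m → ℝ) : ℝ := ⨆ j, b j

/-- `p̲ := min p_{ij}`. -/
def pLo (p : Alph m n → ℝ) : ℝ := ⨅ g, p g

/-- `q̲ := min q_j`. -/
def qLo (p : Alph m n → ℝ) : ℝ := ⨅ j, qf p j

/-- `A_1 := ⌊log a̲ / log b̄⌋ + 1`. -/
def A1 (a : Alph m n → ℝ) (b : Fin m → ℝ) : ℤ :=
  ⌊Real.log (aLo a) / Real.log (bHi b)⌋ + 1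

/-- `A_2 := ⌊log b̲ / log ā⌋ + 1`. -/
def A2 (a : Alph m n → ℝ) (b : Fin m → ℝ) : ℤ :=
  ⌊Real.log (bLo b) / Real.log (aHi a)⌋ + 1

/-- `A_3 := max_{(i,j)∈G} a_{ij}/b_j`. -/
def A3 (a : Alph m n → ℝ) (b : Fin m → ℝ) : ℝ := ⨆ g : Alph m n, a g / b g.1

/-- `A_4 := log A_3 / log b̲`. -/
def A4 (a : Alph m n → ℝ) (b : Fin m → ℝ) : ℝ := Real.log (A3 a b) / Real.log (bLo b)

/-- `A_6 := ⌊1/A_4⌋`. -/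
def A6 (a : Alph m n → ℝ) (b : Fin m → ℝ) : ℤ := ⌊1 / A4 a b⌋

/-- `η̲_r := p̲ q̲^{A_1} a̲^r`. -/
def etaLo (a : Alph m n → ℝ) (b : Fin m → ℝ) (p : Alph m n → ℝ) (r : ℝ) : ℝ :=
  pLo p * qLo p ^ A1 a b * aLo a ^ r

/-- `A_{5,r} := ⌊log(q̲² η̲_r)/(r·log ā)⌋`. -/
def A5 (a : Alph m n → ℝ) (b : Fin m → ℝ) (p : Alph m n → ℝ) (r : ℝ) : ℤ :=
  ⌊Real.log (qLo p ^ 2 * etaLo a b p r) / (r * Real.log (aHi a))⌋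

/-- `T_{1,r} := ⌊(A_1 + A_{5,r} + 3)/A_4⌋`. -/
def T1 (a : Alph m n → ℝ) (b : Fin m → ℝ) (p : Alph m n → ℝ) (r : ℝ) : ℤ :=
  ⌊((A1 a b + A5 a b p r + 3 : ℤ) : ℝ) / A4 a b⌋

/-- `ρ = σ^♭`:  for `σ ∈ Ψ_1`, `σ^♭ = θ`; for `σ ∈ Ψ_l` with `l ≥ 2`, `σ^♭` is the unique
`ρ ∈ Ψ_{l-1}` with `ρ_L = (σ_L)^-` and `ρ_y` an initial segment of `σ_y`. -/
def IsFlat (a : Alph m n → ℝ) (b : Fin m → ℝ) (σ ρ : Wd m n) : Prop :=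
  (σ.1.length = 1 ∧ ρ = (([], []) : Wd m n)) ∨
  (2 ≤ σ.1.length ∧ ρ ∈ Psi a b (σ.1.length - 1) ∧ ρ.1 = σ.1.dropLast ∧ sy ρ <+: sy σ)

/-- `Λ_{n,r} := {σ ∈ Ψ^* : E_r(σ^♭) ≥ η̲_r^n > E_r(σ)}`. -/
def Lam (a : Alph m n → ℝ) (b : Fin m → ℝ) (p : Alph m n → ℝ) (r : ℝ) (N : ℕ) :
    Set (Wd m n) :=
  {σ | σ ∈ PsiStar a b ∧ ∃ ρ : Wd m n, IsFlat a b σ ρ ∧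
    etaLo a b p r ^ N ≤ Er a p r ρ ∧ Er a p r σ < etaLo a b p r ^ N}

/-- `S_{n,r} := {σ ∈ Ψ^* : η̲_r^{n+1} ≤ E_r(σ) < η̲_r^n}`. -/
def Snr (a : Alph m n → ℝ) (b : Fin m → ℝ) (p : Alph m n → ℝ) (r : ℝ) (N : ℕ) :
    Set (Wd m n) :=
  {σ | σ ∈ PsiStar a b ∧ etaLo a b p r ^ (N + 1) ≤ Er a p r σ ∧
    Er a p r σ < etaLo a b p r ^ N}

/-- `G_1(σ) := {ω ∈ S_{n,r} : σ_L ⪯ ω_L and σ_y ⪯ ω_y}`. -/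
def G1 (a : Alph m n → ℝ) (b : Fin m → ℝ) (p : Alph m n → ℝ) (r : ℝ) (N : ℕ)
    (σ : Wd m n) : Set (Wd m n) :=
  {ω | ω ∈ Snr a b p r N ∧ σ.1 <+: ω.1 ∧ sy σ <+: sy ω}

/-- `Λ_h(σ) := {ρ ∈ Φ_{l+h} : σ ⪯ ρ}` (componentwise order on pairs). -/
def LamH (a : Alph m n → ℝ) (b : Fin m → ℝ) (σ : Wd m n) (h : ℕ) : Set (Wd m n) :=
  {ρ | ρ ∈ Psi a b (σ.1.length + h) ∧ σ.1 <+: ρ.1 ∧ σ.2 <+: ρ.2}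

/-- `I_{k,r}(t) := Σ_{ω∈Φ_k} E_r(ω)^t`. -/
def Ih (a : Alph m n → ℝ) (b : Fin m → ℝ) (p : Alph m n → ℝ) (r : ℝ) (k : ℕ) (t : ℝ) : ℝ :=
  ∑' ω : Psi a b k, Er a p r ω.1 ^ t

/-- `Υ_n(t,s) := Σ_{σ∈Ψ_n} (p_{σ_L} q_{σ_R})^t a_{σ_L}^s`. -/
def Ups (a : Alph m n → ℝ) (b : Fin m → ℝ) (p : Alph m n → ℝ) (N : ℕ) (t s : ℝ) : ℝ :=
  ∑' σ : Psi a b N, (pP p σ.1.1 * qP p σ.1.2) ^ t * aP a σ.1.1 ^ s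

/-- `τ_0 := ((1,j_0),(n_{j_0},j_0))`. -/
def tau0 (j0 : Fin m) (h : 2 ≤ n j0) : List (Alph m n) :=
  [⟨j0, ⟨0, by omega⟩⟩, ⟨j0, ⟨n j0 - 1, by omega⟩⟩]

/-- `σ̄` is a bar-extension of `σ ∈ Ψ_l`: `σ̄ ∈ Ψ_{l+2}`, `σ̄_L = σ_L ∗ τ_0`, `σ_R ⪯ σ̄_R`. -/
def BarExt (a : Alph m n → ℝ) (b : Fin m → ℝ) (j0 : Fin m) (h : 2 ≤ n j0)
    (σ σb : Wd m n) : Prop :=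
  σb ∈ Psi a b (σ.1.length + 2) ∧ σb.1 = σ.1 ++ tau0 j0 h ∧ σ.2 <+: σb.2

/-- cylinder set `[σ] ⊆ Φ_∞ = G^ℕ × G_y^ℕ`. -/
def Cyl (σ : Wd m n) : Set ((ℕ → Alph m n) × (ℕ → Fin m)) :=
  {x | (∀ i : ℕ, ∀ hi : i < σ.1.length, x.1 i = σ.1.get ⟨i, hi⟩) ∧
       (∀ i : ℕ, ∀ hi : i < σ.2.length, x.2 i = σ.2.get ⟨i, hi⟩)}

/-- the affine map `f_{ij}(x,y) = (a_{ij} x + c_{ij}, b_j y + d_j)`. -/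
def fmap (a : Alph m n → ℝ) (b : Fin m → ℝ) (c : Alph m n → ℝ) (d : Fin m → ℝ)
    (g : Alph m n) : ℝ × ℝ → ℝ × ℝ :=
  fun x => (a g * x.1 + c g, b g.1 * x.2 + d g.1)

/-- `A_{L,σ} = c_{i_1j_1} + Σ_{p≥2} (∏_{h<p} a_{i_hj_h}) c_{i_pj_p}`. -/
def xL (a c : Alph m n → ℝ) : List (Alph m n) → ℝ
  | [] => 0
  | g :: w => c g + a g * xL a c w

/-- `B_{L,σ} = d_{j_1} + Σ_{p≥2} (∏_{h<p} b_{j_h}) d_{j_p}`. -/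
def yL (b d : Fin m → ℝ) : List (Fin m) → ℝ
  | [] => 0
  | j :: τ => d j + b j * yL b d τ

/-- the approximate square `F_σ = [A_{L,σ}, A_{L,σ}+a_{σ_L}] × [B_{L,σ}, B_{L,σ}+b_{σ_y}]`. -/
def Fsq (a c : Alph m n → ℝ) (b d : Fin m → ℝ) (σ : Wd m n) : Set (ℝ × ℝ) :=
  Set.Icc (xL a c σ.1) (xL a c σ.1 + aP a σ.1) ×ˢ
    Set.Icc (yL b d (sy σ)) (yL b d (sy σ) + bP b (sy σ))

/-- the Euclidean distance on `ℝ²`. -/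
def eudist (x y : ℝ × ℝ) : ℝ := Real.sqrt ((x.1 - y.1) ^ 2 + (x.2 - y.2) ^ 2)

/-- the horizontal distance `d_h(S,T) = inf{|x-x'| : (x,y)∈S, (x',y')∈T}`. -/
def dH (S T : Set (ℝ × ℝ)) : ℝ := sInf {e | ∃ x ∈ S, ∃ y ∈ T, e = |x.1 - y.1|}

/-- the (Euclidean) diameter of a subset of `ℝ²`. -/
def euDiam (S : Set (ℝ × ℝ)) : ℝ := sSup {e | ∃ x ∈ S, ∃ y ∈ S, e = eudist x y}

/-- the `N`-th quantization error of order `r`. -/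
def qerr (μ : Measure (ℝ × ℝ)) (r : ℝ) (N : ℕ) : ℝ :=
  sInf {e : ℝ | ∃ α : Finset (ℝ × ℝ), ∃ hα : α.Nonempty, α.card ≤ N ∧
    e = (∫ x, α.inf' hα (fun y => eudist x y ^ r) ∂μ) ^ (1 / r)}

/-- the topological support of a measure on `ℝ²`. -/
def suppSet (μ : Measure (ℝ × ℝ)) : Set (ℝ × ℝ) :=
  {x | ∀ U : Set (ℝ × ℝ), IsOpen U → x ∈ U → μ U ≠ 0}

/-- the dyadic square `[k 2^{-N}, (k+1) 2^{-N}) × [k' 2^{-N}, (k'+1) 2^{-N})`. -/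
def Dy (N : ℕ) (k : ℤ × ℤ) : Set (ℝ × ℝ) :=
  Set.Ico ((k.1 : ℝ) * (2 : ℝ) ^ (-(N : ℤ))) (((k.1 : ℝ) + 1) * (2 : ℝ) ^ (-(N : ℤ))) ×ˢ
    Set.Ico ((k.2 : ℝ) * (2 : ℝ) ^ (-(N : ℤ))) (((k.2 : ℝ) + 1) * (2 : ℝ) ^ (-(N : ℤ)))


/-!
Write `θ(x) = a_x / b_{x_y}` and let `cut θ` be the set of words `v` with `b_v < θ ≤ b_{v^-}`
(only the first condition for `v = []`). Then `(x, y) ∈ Ψ_h` iff `|x| = h` and `y ∈ cut θ(x)`,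
while `(σ_L u, σ_R v) ∈ Λ_h(σ)` iff `|u| = h` and `v ∈ cut (κ θ(u))`, where
`κ = a_{σ_L} / b_{σ_y} ∈ (1, 1/min b]`. Truncating each `ω = (u, w) ∈ Ψ_h` at the larger threshold
maps `Ψ_h` onto `Λ_h(σ)`, and since the thresholds differ by a bounded factor, the removed tail
`e` of `w` has at most `K` letters, where `(max b)^K < (min b)^2`. Now
`E_r(σ) E_r(ω) = E_r(ρ) q_e` with `q_e` between `(min q)^K` and `1`, and every fibre has at most
as many elements as there are words of length `≤ K`.
-/

section Bounds

lemma exists_pos_forall_le {ι : Type*} [Finite ι] {f : ι → ℝ} (hf : ∀ i, 0 < f i) :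
    ∃ c, 0 < c ∧ ∀ i, c ≤ f i := by
  rcases isEmpty_or_nonempty ι with hι | hι
  · exact ⟨1, one_pos, isEmptyElim⟩
  · obtain ⟨i₀, hi₀⟩ := Finite.exists_min f
    exact ⟨f i₀, hf i₀, hi₀⟩

variable {α : Type*} {b : α → ℝ}

lemma prod_map_nonneg (hb : ∀ x, 0 ≤ b x) (w : List α) : 0 ≤ (w.map b).prod :=
  List.prod_nonneg fun _ hy => by obtain ⟨x, -, rfl⟩ := List.mem_map.1 hy; exact hb x

lemma prod_map_pos (hb : ∀ x, 0 < b x) (w : List α) : 0 < (w.map b).prod :=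
  List.prod_pos fun _ hy => by obtain ⟨x, -, rfl⟩ := List.mem_map.1 hy; exact hb x

lemma prod_map_le_pow_length {B : ℝ} (hb : ∀ x, 0 ≤ b x) (hB : ∀ x, b x ≤ B) (w : List α) :
    (w.map b).prod ≤ B ^ w.length := by
  simpa using List.prod_map_le_prod_map₀ b (fun _ => B) (fun x _ => hb x) (fun x _ => hB x)

lemma pow_length_le_prod_map {A : ℝ} (hA : 0 ≤ A) (hb : ∀ x, A ≤ b x) (w : List α) :
    A ^ w.length ≤ (w.map b).prod := by
  simpa using List.prod_map_le_prod_map₀ (fun _ => A) b (fun _ _ => hA) (fun x _ => hb x)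

lemma exists_forall_length_le_prod_map_lt [Finite α] (hb : ∀ x, 0 ≤ b x) (hb1 : ∀ x, b x < 1)
    {c : ℝ} (hc : 0 < c) : ∃ K : ℕ, ∀ e : List α, K ≤ e.length → (e.map b).prod < c := by
  obtain ⟨B, hB0, hB1, hB⟩ : ∃ B, 0 ≤ B ∧ B < 1 ∧ ∀ x, b x ≤ B := by
    rcases isEmpty_or_nonempty α with hα | hα
    · exact ⟨0, le_rfl, one_pos, isEmptyElim⟩
    · obtain ⟨x₀, hx₀⟩ := Finite.exists_max b
      exact ⟨b x₀, hb x₀, hb1 x₀, hx₀⟩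
  obtain ⟨K, hK⟩ := exists_pow_lt_of_lt_one hc hB1
  exact ⟨K, fun e he => (prod_map_le_pow_length hb hB e).trans_lt
    ((pow_le_pow_of_le_one hB0 hB1.le he).trans_lt hK)⟩

lemma exists_pos_forall_length_le_le_prod_map [Finite α] (hb : ∀ x, 0 < b x) (K : ℕ) :
    ∃ c, 0 < c ∧ ∀ e : List α, e.length ≤ K → c ≤ (e.map b).prod := by
  obtain ⟨c, hc, hcb⟩ := exists_pos_forall_le hb
  refine ⟨min c 1 ^ K, by positivity, fun e he => ?_⟩
  exact (pow_le_pow_of_le_one (by positivity) (min_le_right _ _) he).trans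
    (pow_length_le_prod_map (by positivity) (fun x => (min_le_left _ _).trans (hcb x)) e)

lemma prod_map_le_of_prefix (hb : ∀ x, 0 ≤ b x) (hb1 : ∀ x, b x ≤ 1) {v w : List α}
    (h : v <+: w) : (w.map b).prod ≤ (v.map b).prod := by
  obtain ⟨e, rfl⟩ := h
  rw [List.map_append, List.prod_append]
  exact mul_le_of_le_one_right (prod_map_nonneg hb v)
    ((prod_map_le_pow_length hb hb1 e).trans_eq (one_pow _))

end Bounds

section Fiberwise

variable {ι κ : Type*} [DecidableEq κ] {s : Finset ι} {T : Finset κ} {φ : ι → κ}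
  {f : ι → ℝ} {g : κ → ℝ}

lemma sum_le_mul_sum_of_surjOn {C : ℝ} (hφ : ∀ x ∈ s, φ x ∈ T)
    (hsurj : ∀ y ∈ T, ∃ x ∈ s, φ x = y) (hf : ∀ x ∈ s, 0 ≤ f x) (hC : 0 ≤ C)
    (hg : ∀ x ∈ s, g (φ x) ≤ C * f x) : ∑ y ∈ T, g y ≤ C * ∑ x ∈ s, f x := by
  rw [← Finset.sum_fiberwise_of_maps_to hφ f, Finset.mul_sum]
  refine Finset.sum_le_sum fun y hy => ?_
  obtain ⟨x, hx, rfl⟩ := hsurj y hy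
  refine (hg x hx).trans (mul_le_mul_of_nonneg_left ?_ hC)
  exact Finset.single_le_sum (fun x' hx' => hf x' (Finset.mem_filter.1 hx').1)
    (Finset.mem_filter.2 ⟨hx, rfl⟩)

lemma sum_le_mul_sum_of_card_fiber_le {M : ℕ} (hφ : ∀ x ∈ s, φ x ∈ T)
    (hg : ∀ y ∈ T, 0 ≤ g y) (hf : ∀ x ∈ s, f x ≤ g (φ x))
    (hM : ∀ y ∈ T, (s.filter fun x => φ x = y).card ≤ M) :
    ∑ x ∈ s, f x ≤ M * ∑ y ∈ T, g y := by
  rw [← Finset.sum_fiberwise_of_maps_to hφ f, Finset.mul_sum]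
  refine Finset.sum_le_sum fun y hy => ?_
  calc ∑ x ∈ s with φ x = y, f x ≤ ∑ x ∈ s with φ x = y, g y :=
        Finset.sum_le_sum fun x hx => (Finset.mem_filter.1 hx).2 ▸ hf x (Finset.mem_filter.1 hx).1
    _ = (s.filter fun x => φ x = y).card * g y := by rw [Finset.sum_const, nsmul_eq_mul]
    _ ≤ M * g y := mul_le_mul_of_nonneg_right (by exact_mod_cast hM y hy) (hg y hy)

end Fiberwise

lemma _root_.Set.Finite.tsum_subtype_eq_sum {α : Type*} {S : Set α} (hS : S.Finite) (f : α → ℝ) :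
    ∑' x : S, f x = ∑ x ∈ hS.toFinset, f x := by
  conv_lhs => rw [← hS.coe_toFinset]
  exact hS.toFinset.tsum_subtype' f

section Cut

variable {α : Type*} (b : α → ℝ)

/-- The shortest prefix `v` of `w` with `b_v < θ`, or `w` itself if there is none. -/
def cutPrefix : ℝ → List α → List α
  | _, [] => []
  | θ, x :: w => if 1 < θ then [] else x :: cutPrefix (θ / b x) w

def cut (θ : ℝ) : Set (List α) :=
  {v | (v.map b).prod < θ ∧ (v ≠ [] → θ ≤ (v.dropLast.map b).prod)}

variable {b} {θ θ' : ℝ} {v w : List α}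

@[simp]
lemma nil_mem_cut : [] ∈ cut b θ ↔ 1 < θ := by
  simp [cut]

lemma cutPrefix_prefix (θ : ℝ) (w : List α) : cutPrefix b θ w <+: w := by
  induction w generalizing θ with
  | nil => exact List.nil_prefix
  | cons x w ih =>
    rw [cutPrefix]
    split
    · exact List.nil_prefix
    · exact List.cons_prefix_cons.2 ⟨rfl, ih _⟩

lemma cons_mem_cut {x : α} (hx : 0 < b x) (hθ : θ ≤ 1) (hv : v ∈ cut b (θ / b x)) :
    x :: v ∈ cut b θ := by
  obtain ⟨hlt, hle⟩ := hv
  refine ⟨?_, fun _ => ?_⟩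
  · rw [lt_div_iff₀ hx] at hlt
    simpa [mul_comm] using hlt
  · rcases eq_or_ne v [] with rfl | hv
    · simpa using hθ
    · rw [List.dropLast_cons_of_ne_nil hv, List.map_cons, List.prod_cons, mul_comm,
        ← div_le_iff₀ hx]
      exact hle hv

lemma cutPrefix_mem_cut (hb : ∀ x, 0 < b x) (hw : (w.map b).prod < θ) :
    cutPrefix b θ w ∈ cut b θ := by
  induction w generalizing θ with
  | nil => exact nil_mem_cut.2 (by simpa using hw)
  | cons x w ih =>
    rw [cutPrefix]
    split_ifs with hθ
    · exact nil_mem_cut.2 hθ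
    · refine cons_mem_cut (hb x) (not_lt.1 hθ) (ih ?_)
      rw [lt_div_iff₀ (hb x)]
      simpa [mul_comm] using hw

lemma eq_of_prefix_of_mem_cut (hb : ∀ x, 0 ≤ b x) (hb1 : ∀ x, b x ≤ 1) (hθ : θ ≤ θ')
    (hv : v ∈ cut b θ) (hw : w ∈ cut b θ') (hvw : v <+: w) : v = w := by
  by_contra hne
  have hlt : v.length < w.length :=
    hvw.length_le.lt_of_ne fun h => hne (hvw.eq_of_length h)
  have hw0 : w ≠ [] := by rintro rfl; simp at hlt
  have hv' : v <+: w.dropLast :=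
    List.prefix_of_prefix_length_le hvw w.dropLast_prefix (by simp; omega)
  linarith [prod_map_le_of_prefix hb hb1 hv', hv.1, hw.2 hw0]

lemma cutPrefix_eq_of_mem_cut (hb : ∀ x, 0 < b x) (hb1 : ∀ x, b x ≤ 1) (hv : v ∈ cut b θ)
    (hvw : v <+: w) : cutPrefix b θ w = v := by
  have hb0 : ∀ x, 0 ≤ b x := fun x => (hb x).le
  have hc := cutPrefix_mem_cut hb ((prod_map_le_of_prefix hb0 hb1 hvw).trans_lt hv.1)
  rcases List.prefix_or_prefix_of_prefix (cutPrefix_prefix θ w) hvw with h | h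
  · exact eq_of_prefix_of_mem_cut hb0 hb1 le_rfl hc hv h
  · exact (eq_of_prefix_of_mem_cut hb0 hb1 le_rfl hv hc h).symm

lemma mul_le_prod_map_of_mem_cut {β : ℝ} (hb : ∀ x, 0 ≤ b x) (hβ0 : 0 ≤ β)
    (hβ : ∀ x, β ≤ b x) (hw : w ∈ cut b θ) (hw0 : w ≠ []) : θ * β ≤ (w.map b).prod := by
  conv_rhs => rw [← List.dropLast_append_getLast hw0]
  rw [List.map_append, List.prod_append, List.map_singleton, List.prod_singleton]
  exact mul_le_mul (hw.2 hw0) (hβ _) hβ0 (prod_map_nonneg hb _)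

lemma length_le_of_mem_cut {N : ℕ} (hN : ∀ e : List α, N ≤ e.length → (e.map b).prod < θ)
    (hw : w ∈ cut b θ) : w.length ≤ N := by
  by_contra! hlt
  have hw0 : w ≠ [] := by rintro rfl; simp at hlt
  linarith [hN w.dropLast (by simp; omega), hw.2 hw0]

lemma append_mem_cut_iff {θ₀ : ℝ} {s : List α} (hb : ∀ x, 0 < b x) (hs : s ∈ cut b θ₀)
    (hθ : θ ≤ θ₀) : s ++ v ∈ cut b θ ↔ v ∈ cut b (θ / (s.map b).prod) := by
  have hP := prod_map_pos hb s
  rcases eq_or_ne v [] with rfl | hv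
  · rw [List.append_nil, nil_mem_cut, one_lt_div hP]
    exact ⟨fun h => h.1, fun h => ⟨h, fun hs0 => hθ.trans (hs.2 hs0)⟩⟩
  · simp only [cut, Set.mem_ofPred_eq, List.dropLast_append_of_ne_nil hv, List.map_append,
      List.prod_append, ne_eq, List.append_eq_nil_iff, hv, and_false, not_false_eq_true,
      forall_const, lt_div_iff₀ hP, div_le_iff₀ hP, mul_comm]

lemma length_le_length_add_of_prefix {β : ℝ} {K : ℕ} (hb : ∀ x, 0 < b x) (hβ0 : 0 ≤ β)
    (hβ : ∀ x, β ≤ b x) (hK : ∀ e : List α, K ≤ e.length → (e.map b).prod ≤ β ^ 2)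
    (hθ' : θ' * β ≤ θ) (hv : v ∈ cut b θ') (hw : w ∈ cut b θ) (hvw : v <+: w) :
    w.length ≤ v.length + K := by
  obtain ⟨e, rfl⟩ := hvw
  by_contra! hlt
  have he : K ≤ e.length := by simp only [List.length_append] at hlt; omega
  have hw0 : v ++ e ≠ [] := fun h => by rw [h] at hlt; simp at hlt
  have h1 := mul_le_prod_map_of_mem_cut (fun x => (hb x).le) hβ0 hβ hw hw0
  rw [List.map_append, List.prod_append] at h1
  have hθ'0 : 0 ≤ θ' := ((prod_map_pos hb v).trans hv.1).le
  have : θ * β < θ * β := calc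
    θ * β ≤ (v.map b).prod * (e.map b).prod := h1
    _ < θ' * (e.map b).prod := mul_lt_mul_of_pos_right hv.1 (prod_map_pos hb e)
    _ ≤ θ' * β ^ 2 := mul_le_mul_of_nonneg_left (hK e he) hθ'0
    _ = θ' * β * β := by ring
    _ ≤ θ * β := mul_le_mul_of_nonneg_right hθ' hβ0
  exact lt_irrefl _ this

lemma exists_mem_cut_of_prefix [Nonempty α] {β : ℝ} {K : ℕ} (hb : ∀ x, 0 < b x)
    (hb1 : ∀ x, b x ≤ 1) (hβ0 : 0 ≤ β) (hβ : ∀ x, β ≤ b x)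
    (hK : ∀ e : List α, K ≤ e.length → (e.map b).prod ≤ β ^ 2) (hθ : θ ≤ θ')
    (hθ' : θ' * β ≤ θ) (hv : v ∈ cut b θ') : ∃ w ∈ cut b θ, v <+: w := by
  obtain ⟨x⟩ := ‹Nonempty α›
  have hθ'0 : 0 ≤ θ' := ((prod_map_pos hb v).trans hv.1).le
  have hrep : ((List.replicate K x).map b).prod ≤ β :=
    (hK _ (by simp)).trans (pow_le_of_le_one hβ0 ((hβ x).trans (hb1 x)) two_ne_zero)
  have hlt : ((v ++ List.replicate K x).map b).prod < θ := by
    rw [List.map_append, List.prod_append]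
    calc _ < θ' * ((List.replicate K x).map b).prod :=
          mul_lt_mul_of_pos_right hv.1 (prod_map_pos hb _)
      _ ≤ θ' * β := mul_le_mul_of_nonneg_left hrep hθ'0
      _ ≤ θ := hθ'
  have hw := cutPrefix_mem_cut hb hlt
  refine ⟨_, hw, ?_⟩
  rcases List.prefix_or_prefix_of_prefix (List.prefix_append v _) (cutPrefix_prefix θ _)
    with h | h
  · exact h
  · rw [eq_of_prefix_of_mem_cut (fun x => (hb x).le) hb1 hθ hw hv h]

end Cut

section Graft

variable {a : Alph m n → ℝ} {b : Fin m → ℝ} {p : Alph m n → ℝ} {r : ℝ}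

lemma aP_append (x x' : List (Alph m n)) : aP a (x ++ x') = aP a x * aP a x' := by
  simp [aP]

lemma bP_append (τ τ' : List (Fin m)) : bP b (τ ++ τ') = bP b τ * bP b τ' := by
  simp [bP]

lemma aP_pos (ha : ∀ g, 0 < a g) (x : List (Alph m n)) : 0 < aP a x := prod_map_pos ha x

lemma bP_pos (hb : ∀ j, 0 < b j) (τ : List (Fin m)) : 0 < bP b τ := prod_map_pos hb τ

def aspect (a : Alph m n → ℝ) (b : Fin m → ℝ) (x : List (Alph m n)) : ℝ :=
  aP a x / bP b (x.map Sigma.fst)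

lemma aspect_append (x x' : List (Alph m n)) :
    aspect a b (x ++ x') = aspect a b x * aspect a b x' := by
  simp only [aspect, aP_append, List.map_append, bP_append, mul_div_mul_comm]

lemma aspect_pos (ha : ∀ g, 0 < a g) (hb : ∀ j, 0 < b j) (x : List (Alph m n)) :
    0 < aspect a b x :=
  div_pos (aP_pos ha x) (bP_pos hb _)

lemma aspect_le_one (ha : ∀ g, 0 < a g) (hb : ∀ j, 0 < b j) (hab : ∀ g, a g ≤ b g.1)
    (x : List (Alph m n)) : aspect a b x ≤ 1 := by
  rw [aspect, div_le_one (bP_pos hb _)]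
  simpa [aP, bP] using
    List.prod_map_le_prod_map₀ a (b ∘ Sigma.fst) (fun g _ => (ha g).le) (fun g _ => hab g)

lemma mem_Psi_iff (hb : ∀ j, 0 < b j) {l : ℕ} {x : List (Alph m n)} {y : List (Fin m)} :
    (x, y) ∈ Psi a b l ↔ x.length = l ∧ y ≠ [] ∧ y ∈ cut b (aspect a b x) := by
  have hx := bP_pos hb (x.map Sigma.fst)
  rcases eq_or_ne y [] with rfl | hy
  · simp [Psi]
  · simp only [Psi, sy, cut, aspect, Set.mem_ofPred_eq, List.dropLast_append_of_ne_nil hy,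
      bP_append, lt_div_iff₀ hx, div_le_iff₀ hx]
    constructor
    · rintro ⟨hl, -, h1, h2⟩
      exact ⟨hl, hy, by rw [mul_comm]; exact h2, fun _ => by rw [mul_comm]; exact h1⟩
    · rintro ⟨hl, -, h1, h2⟩
      exact ⟨hl, List.length_pos_iff.2 hy, by rw [mul_comm]; exact h2 hy,
        by rw [mul_comm]; exact h1⟩

lemma mem_LamH_iff (ha : ∀ g, 0 < a g) (hb : ∀ j, 0 < b j) (hab : ∀ g, a g ≤ b g.1)
    {l h : ℕ} {σ ρ : Wd m n} (hσ : σ ∈ Psi a b l) :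
    ρ ∈ LamH a b σ h ↔ ∃ u v, ρ = (σ.1 ++ u, σ.2 ++ v) ∧ u.length = h ∧
      v ∈ cut b (aspect a b σ.1 / bP b σ.2 * aspect a b u) := by
  obtain ⟨-, hσ0, hσcut⟩ := (mem_Psi_iff hb).1 hσ
  have key : ∀ u v, (σ.1 ++ u, σ.2 ++ v) ∈ Psi a b (σ.1.length + h) ↔
      u.length = h ∧ v ∈ cut b (aspect a b σ.1 / bP b σ.2 * aspect a b u) := by
    intro u v
    have hθ : aspect a b σ.1 * aspect a b u ≤ aspect a b σ.1 :=
      mul_le_of_le_one_right (aspect_pos ha hb _).le (aspect_le_one ha hb hab u)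
    rw [mem_Psi_iff hb, aspect_append, append_mem_cut_iff hb hσcut hθ, mul_div_right_comm]
    exact and_congr (by simp) (and_iff_right (by simp [hσ0]))
  constructor
  · rintro ⟨hρ, ⟨u, hu⟩, ⟨v, hv⟩⟩
    obtain ⟨ρ₁, ρ₂⟩ := ρ
    dsimp only at hu hv
    subst hu hv
    exact ⟨u, v, rfl, (key u v).1 hρ⟩
  · rintro ⟨u, v, rfl, hv⟩
    exact ⟨(key u v).2 hv, List.prefix_append _ _, List.prefix_append _ _⟩

/-- The map `Ψ_h → Λ_h(σ)`: `ω_L` is appended to `σ_L`, and `σ_R` is followed by the shortest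
prefix of `ω_R` that makes the result an element of `Ψ_{l+h}`. -/
def graft (a : Alph m n → ℝ) (b : Fin m → ℝ) (σ ω : Wd m n) : Wd m n :=
  (σ.1 ++ ω.1, σ.2 ++ cutPrefix b (aspect a b σ.1 / bP b σ.2 * aspect a b ω.1) ω.2)

lemma aspect_le_scaled_aspect (ha : ∀ g, 0 < a g) (hb : ∀ j, 0 < b j) {l : ℕ} {σ : Wd m n}
    (hσ : σ ∈ Psi a b l) (u : List (Alph m n)) :
    aspect a b u ≤ aspect a b σ.1 / bP b σ.2 * aspect a b u := by
  obtain ⟨-, -, hσcut⟩ := (mem_Psi_iff hb).1 hσ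
  exact le_mul_of_one_le_left (aspect_pos ha hb u).le ((one_le_div (bP_pos hb _)).2 hσcut.1.le)

lemma scaled_aspect_mul_le_aspect (ha : ∀ g, 0 < a g) (hb : ∀ j, 0 < b j) {β : ℝ}
    (hβ0 : 0 ≤ β) (hβ : ∀ j, β ≤ b j) {l : ℕ} {σ : Wd m n} (hσ : σ ∈ Psi a b l)
    (u : List (Alph m n)) : aspect a b σ.1 / bP b σ.2 * aspect a b u * β ≤ aspect a b u := by
  obtain ⟨-, hσ0, hσcut⟩ := (mem_Psi_iff hb).1 hσ
  have h : aspect a b σ.1 / bP b σ.2 * β ≤ 1 := by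
    rw [div_mul_eq_mul_div, div_le_one (bP_pos hb _)]
    exact mul_le_prod_map_of_mem_cut (fun j => (hb j).le) hβ0 hβ hσcut hσ0
  rw [mul_right_comm]
  exact mul_le_of_le_one_left (aspect_pos ha hb u).le h

lemma graft_mem_LamH (ha : ∀ g, 0 < a g) (hb : ∀ j, 0 < b j) (hab : ∀ g, a g ≤ b g.1)
    {l h : ℕ} {σ ω : Wd m n} (hσ : σ ∈ Psi a b l) (hω : ω ∈ Psi a b h) :
    graft a b σ ω ∈ LamH a b σ h := by
  obtain ⟨hω1, -, hωcut⟩ := (mem_Psi_iff hb).1 hω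
  exact (mem_LamH_iff ha hb hab hσ).2 ⟨ω.1, _, rfl, hω1,
    cutPrefix_mem_cut hb (hωcut.1.trans_le (aspect_le_scaled_aspect ha hb hσ ω.1))⟩

lemma exists_graft_eq (ha : ∀ g, 0 < a g) (hb : ∀ j, 0 < b j) (hb1 : ∀ j, b j ≤ 1)
    (hab : ∀ g, a g ≤ b g.1) {β : ℝ} (hβ0 : 0 ≤ β) (hβ : ∀ j, β ≤ b j) {K : ℕ}
    (hK : ∀ e : List (Fin m), K ≤ e.length → bP b e ≤ β ^ 2) {l h : ℕ} {σ ρ : Wd m n}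
    (hσ : σ ∈ Psi a b l) (hρ : ρ ∈ LamH a b σ h) : ∃ ω ∈ Psi a b h, graft a b σ ω = ρ := by
  obtain ⟨u, v, rfl, hu, hv⟩ := (mem_LamH_iff ha hb hab hσ).1 hρ
  obtain ⟨-, hσ0, -⟩ := (mem_Psi_iff hb).1 hσ
  have : Nonempty (Fin m) := ⟨σ.2.head hσ0⟩
  obtain ⟨w, hw, hvw⟩ := exists_mem_cut_of_prefix hb hb1 hβ0 hβ hK
    (aspect_le_scaled_aspect ha hb hσ u) (scaled_aspect_mul_le_aspect ha hb hβ0 hβ hσ u) hv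
  have hw0 : w ≠ [] := by
    rintro rfl
    exact (aspect_le_one ha hb hab u).not_gt (nil_mem_cut.1 hw)
  refine ⟨(u, w), (mem_Psi_iff hb).2 ⟨hu, hw0, hw⟩, ?_⟩
  simp only [graft, cutPrefix_eq_of_mem_cut hb hb1 hv hvw]

lemma exists_graft_append_eq (ha : ∀ g, 0 < a g) (hb : ∀ j, 0 < b j) {β : ℝ} (hβ0 : 0 ≤ β)
    (hβ : ∀ j, β ≤ b j) {K : ℕ} (hK : ∀ e : List (Fin m), K ≤ e.length → bP b e ≤ β ^ 2)
    {l h : ℕ} {σ ω : Wd m n} (hσ : σ ∈ Psi a b l) (hω : ω ∈ Psi a b h) :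
    ∃ e : List (Fin m), e.length ≤ K ∧ (graft a b σ ω).2 ++ e = σ.2 ++ ω.2 := by
  obtain ⟨-, -, hωcut⟩ := (mem_Psi_iff hb).1 hω
  have hθ := aspect_le_scaled_aspect ha hb hσ ω.1
  obtain ⟨e, he⟩ := cutPrefix_prefix (b := b) (aspect a b σ.1 / bP b σ.2 * aspect a b ω.1) ω.2
  refine ⟨e, ?_, by simp [graft, he]⟩
  have hlen := length_le_length_add_of_prefix hb hβ0 hβ hK
    (scaled_aspect_mul_le_aspect ha hb hβ0 hβ hσ ω.1) (cutPrefix_mem_cut hb (hωcut.1.trans_le hθ))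
    hωcut ⟨e, he⟩
  have := congrArg List.length he
  simp only [List.length_append] at this
  omega

end Graft

section Sums

variable {a : Alph m n → ℝ} {b : Fin m → ℝ} {p : Alph m n → ℝ} {r : ℝ}

lemma Psi_finite (ha : ∀ g, 0 < a g) (hb : ∀ j, 0 < b j) (hb1 : ∀ j, b j < 1) (k : ℕ) :
    (Psi a b k).Finite := by
  obtain ⟨A, hA, hAa⟩ := exists_pos_forall_le ha
  obtain ⟨N, hN⟩ :=
    exists_forall_length_le_prod_map_lt (fun j => (hb j).le) hb1 (pow_pos hA k)
  refine ((List.finite_length_le _ k).prod (List.finite_length_le _ N)).subset ?_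
  rintro ⟨x, y⟩ hxy
  obtain ⟨hx, -, hy⟩ := (mem_Psi_iff hb).1 hxy
  have hAx : A ^ k ≤ aspect a b x := by
    rw [← hx]
    exact (pow_length_le_prod_map hA.le hAa x).trans <| le_div_self (aP_pos ha x).le
      (bP_pos hb _) ((prod_map_le_pow_length (fun j => (hb j).le) (fun j => (hb1 j).le) _).trans_eq
        (one_pow _))
  exact ⟨hx.le, length_le_of_mem_cut (fun e he => (hN e he).trans_le hAx) hy⟩

lemma qf_le_one (hp : ∀ g, 0 < p g) (hp1 : ∑ g, p g = 1) (j : Fin m) : qf p j ≤ 1 := by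
  rw [← hp1, ← Finset.univ_sigma_univ, Finset.sum_sigma]
  exact Finset.single_le_sum (f := qf p) (fun j _ => Finset.sum_nonneg fun i _ => (hp _).le)
    (Finset.mem_univ j)

lemma Er_pos (ha : ∀ g, 0 < a g) (hp : ∀ g, 0 < p g) (hq : ∀ j, 0 < qf p j) (σ : Wd m n) :
    0 < Er a p r σ :=
  mul_pos (mul_pos (prod_map_pos hp _) (prod_map_pos hq _)) (Real.rpow_pos_of_pos (aP_pos ha _) r)

lemma Er_append (ha : ∀ g, 0 ≤ a g) (σ ω : Wd m n) :
    Er a p r (σ.1 ++ ω.1, σ.2 ++ ω.2) = Er a p r σ * Er a p r ω := by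
  simp only [Er, pP, qP, aP, List.map_append, List.prod_append]
  rw [Real.mul_rpow (prod_map_nonneg ha _) (prod_map_nonneg ha _)]
  ring

lemma Er_append_right (σ : Wd m n) (e : List (Fin m)) :
    Er a p r (σ.1, σ.2 ++ e) = Er a p r σ * qP p e := by
  simp only [Er, qP, List.map_append, List.prod_append]
  ring

lemma exists_Er_mul_Er_eq (ha : ∀ g, 0 < a g) (hb : ∀ j, 0 < b j) {β : ℝ} (hβ0 : 0 ≤ β)
    (hβ : ∀ j, β ≤ b j) {K : ℕ} (hK : ∀ e : List (Fin m), K ≤ e.length → bP b e ≤ β ^ 2)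
    {l h : ℕ} {σ ω : Wd m n} (hσ : σ ∈ Psi a b l) (hω : ω ∈ Psi a b h) :
    ∃ e : List (Fin m), e.length ≤ K ∧
      Er a p r σ * Er a p r ω = Er a p r (graft a b σ ω) * qP p e := by
  obtain ⟨e, he, hge⟩ := exists_graft_append_eq ha hb hβ0 hβ hK hσ hω
  refine ⟨e, he, ?_⟩
  rw [← Er_append (fun g => (ha g).le), ← Er_append_right, hge]
  rfl

lemma card_filter_graft_eq_le (ha : ∀ g, 0 < a g) (hb : ∀ j, 0 < b j) {β : ℝ} (hβ0 : 0 ≤ β)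
    (hβ : ∀ j, β ≤ b j) {K : ℕ} (hK : ∀ e : List (Fin m), K ≤ e.length → bP b e ≤ β ^ 2)
    {l h : ℕ} {σ : Wd m n} (hσ : σ ∈ Psi a b l) {s : Finset (Wd m n)}
    (hs : ∀ ω ∈ s, ω ∈ Psi a b h) (ρ : Wd m n) :
    (s.filter fun ω => graft a b σ ω = ρ).card ≤
      (List.finite_length_le (Fin m) K).toFinset.card := by
  classical
  refine (Finset.card_le_card fun ω hω => ?_).trans (Finset.card_image_le
    (f := fun e => (ρ.1.drop σ.1.length, (ρ.2 ++ e).drop σ.2.length)))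
  obtain ⟨hωs, rfl⟩ := Finset.mem_filter.1 hω
  obtain ⟨e, he, hge⟩ := exists_graft_append_eq ha hb hβ0 hβ hK hσ (hs ω hωs)
  refine Finset.mem_image.2 ⟨e, by simpa using he, ?_⟩
  rw [hge]
  simp [graft]

lemma tsum_LamH_le (ha : ∀ g, 0 < a g) (hb : ∀ j, 0 < b j) (hb1 : ∀ j, b j < 1)
    (hab : ∀ g, a g ≤ b g.1) {β : ℝ} (hβ0 : 0 ≤ β) (hβ : ∀ j, β ≤ b j) {K : ℕ}
    (hK : ∀ e : List (Fin m), K ≤ e.length → bP b e ≤ β ^ 2) (hp : ∀ g, 0 < p g)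
    (hq : ∀ j, 0 < qf p j) {c : ℝ} (hc : 0 < c)
    (hcq : ∀ e : List (Fin m), e.length ≤ K → c ≤ qP p e)
    {t : ℝ} (ht : 0 ≤ t) {l : ℕ} {σ : Wd m n} (hσ : σ ∈ Psi a b l) (h : ℕ) :
    ∑' ρ : LamH a b σ h, Er a p r ρ.1 ^ t ≤ c⁻¹ ^ t * Er a p r σ ^ t * Ih a b p r h t := by
  classical
  have hΨ := Psi_finite ha hb hb1 h
  have hΛ : Set.Finite (LamH a b σ h) := (Psi_finite ha hb hb1 _).subset fun _ hρ => hρ.1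
  have hE := Er_pos ha hp hq (r := r)
  have hEt : ∀ ω, 0 ≤ Er a p r ω ^ t := fun ω => Real.rpow_nonneg (hE ω).le t
  rw [Ih, hΛ.tsum_subtype_eq_sum (Er a p r · ^ t), hΨ.tsum_subtype_eq_sum (Er a p r · ^ t),
    mul_assoc, Finset.mul_sum]
  refine sum_le_mul_sum_of_surjOn (φ := graft a b σ)
    (fun ω hω => hΛ.mem_toFinset.2 (graft_mem_LamH ha hb hab hσ (hΨ.mem_toFinset.1 hω)))
    (fun ρ hρ => ?_) (fun ω _ => mul_nonneg (hEt σ) (hEt ω)) (Real.rpow_nonneg (inv_pos.2 hc).le t)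
    (fun ω hω => ?_)
  · obtain ⟨ω, hω, hωρ⟩ := exists_graft_eq ha hb (fun j => (hb1 j).le) hab hβ0 hβ hK hσ
      (hΛ.mem_toFinset.1 hρ)
    exact ⟨ω, hΨ.mem_toFinset.2 hω, hωρ⟩
  · obtain ⟨e, he, hEe⟩ := exists_Er_mul_Er_eq (p := p) (r := r) ha hb hβ0 hβ hK hσ
      (hΨ.mem_toFinset.1 hω)
    rw [← Real.mul_rpow (hE σ).le (hE ω).le,
      ← Real.mul_rpow (inv_pos.2 hc).le (mul_pos (hE σ) (hE ω)).le]
    refine Real.rpow_le_rpow (hE _).le ?_ ht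
    rw [hEe, le_inv_mul_iff₀ hc, mul_comm]
    exact mul_le_mul_of_nonneg_left (hcq e he) (hE _).le

lemma inv_card_mul_Er_mul_Ih_le (ha : ∀ g, 0 < a g) (hb : ∀ j, 0 < b j) (hb1 : ∀ j, b j < 1)
    (hab : ∀ g, a g ≤ b g.1) {β : ℝ} (hβ0 : 0 ≤ β) (hβ : ∀ j, β ≤ b j) {K : ℕ}
    (hK : ∀ e : List (Fin m), K ≤ e.length → bP b e ≤ β ^ 2) (hp : ∀ g, 0 < p g)
    (hq : ∀ j, 0 < qf p j) (hq1 : ∀ j, qf p j ≤ 1) {t : ℝ} (ht : 0 ≤ t) {l : ℕ} {σ : Wd m n}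
    (hσ : σ ∈ Psi a b l) (h : ℕ) :
    ((List.finite_length_le (Fin m) K).toFinset.card : ℝ)⁻¹ * Er a p r σ ^ t * Ih a b p r h t ≤
      ∑' ρ : LamH a b σ h, Er a p r ρ.1 ^ t := by
  classical
  have hΨ := Psi_finite ha hb hb1 h
  have hΛ : Set.Finite (LamH a b σ h) := (Psi_finite ha hb hb1 _).subset fun _ hρ => hρ.1
  have hE := Er_pos ha hp hq (r := r)
  have hEt : ∀ ω, 0 ≤ Er a p r ω ^ t := fun ω => Real.rpow_nonneg (hE ω).le t
  have hM : (0 : ℝ) < (List.finite_length_le (Fin m) K).toFinset.card :=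
    Nat.cast_pos.2 (Finset.card_pos.2 ⟨[], by simp⟩)
  rw [Ih, hΛ.tsum_subtype_eq_sum (Er a p r · ^ t), hΨ.tsum_subtype_eq_sum (Er a p r · ^ t),
    mul_assoc, inv_mul_le_iff₀ hM, Finset.mul_sum]
  refine sum_le_mul_sum_of_card_fiber_le (φ := graft a b σ)
    (fun ω hω => hΛ.mem_toFinset.2 (graft_mem_LamH ha hb hab hσ (hΨ.mem_toFinset.1 hω)))
    (fun ρ _ => hEt ρ) (fun ω hω => ?_)
    (fun ρ _ => card_filter_graft_eq_le ha hb hβ0 hβ hK hσ (fun ω hω => hΨ.mem_toFinset.1 hω) ρ)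
  obtain ⟨e, -, hEe⟩ := exists_Er_mul_Er_eq (p := p) (r := r) ha hb hβ0 hβ hK hσ
    (hΨ.mem_toFinset.1 hω)
  rw [← Real.mul_rpow (hE σ).le (hE ω).le]
  refine Real.rpow_le_rpow (mul_pos (hE σ) (hE ω)).le ?_ ht
  rw [hEe]
  exact mul_le_of_le_one_right (hE _).le
    ((prod_map_le_pow_length (fun j => (hq j).le) hq1 e).trans_eq (one_pow _))

end Sums

theorem stmt12_general
    (m : ℕ) (n : Fin m → ℕ) (hn : ∀ j, 1 ≤ n j)
    (a : Alph m n → ℝ) (b : Fin m → ℝ)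
    (hab : ∀ g : Alph m n, 0 < a g ∧ a g < b g.1 ∧ b g.1 < 1)
    (p : Alph m n → ℝ) (hp : ∀ g, 0 < p g) (hp1 : ∑ g : Alph m n, p g = 1)
    (r : ℝ)
    (t : ℝ) (ht : 0 ≤ t) :
    ∃ h1 h2 : ℝ, 0 < h1 ∧ 0 < h2 ∧
      ∀ l : ℕ, 1 ≤ l → ∀ σ ∈ Psi a b l, ∀ h : ℕ, 1 ≤ h →
        h2 * Er a p r σ ^ t * Ih a b p r h t ≤
            (∑' ρ : LamH a b σ h, Er a p r ρ.1 ^ t) ∧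
          (∑' ρ : LamH a b σ h, Er a p r ρ.1 ^ t) ≤
            h1 * Er a p r σ ^ t * Ih a b p r h t := by
  have ha : ∀ g, 0 < a g := fun g => (hab g).1
  have hab' : ∀ g, a g ≤ b g.1 := fun g => (hab g).2.1.le
  have hb : ∀ j, 0 < b j := fun j => (ha _).trans (hab ⟨j, ⟨0, hn j⟩⟩).2.1
  have hb1 : ∀ j, b j < 1 := fun j => (hab ⟨j, ⟨0, hn j⟩⟩).2.2
  have hq : ∀ j, 0 < qf p j := fun j =>
    Finset.sum_pos (fun i _ => hp _) ⟨⟨0, hn j⟩, Finset.mem_univ _⟩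
  obtain ⟨β, hβ, hβb⟩ := exists_pos_forall_le hb
  obtain ⟨K, hK⟩ :=
    exists_forall_length_le_prod_map_lt (fun j => (hb j).le) hb1 (pow_pos hβ 2)
  obtain ⟨c, hc, hcq⟩ := exists_pos_forall_length_le_le_prod_map hq K
  refine ⟨c⁻¹ ^ t, ((List.finite_length_le (Fin m) K).toFinset.card : ℝ)⁻¹, by positivity,
    inv_pos.2 (Nat.cast_pos.2 (Finset.card_pos.2 ⟨[], by simp⟩)), fun l _ σ hσ h _ => ⟨?_, ?_⟩⟩
  · exact inv_card_mul_Er_mul_Ih_le ha hb hb1 hab' hβ.le hβb (fun e he => (hK e he).le) hp hq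
      (qf_le_one hp hp1) ht hσ h
  · exact tsum_LamH_le ha hb hb1 hab' hβ.le hβb (fun e he => (hK e he).le) hp hq hc hcq ht hσ h

theorem stmt12
    (m : ℕ) (hm : 2 ≤ m) (n : Fin m → ℕ) (hn : ∀ j, 1 ≤ n j)
    (a : Alph m n → ℝ) (b : Fin m → ℝ)
    (hab : ∀ g : Alph m n, 0 < a g ∧ a g < b g.1 ∧ b g.1 < 1)
    (p : Alph m n → ℝ) (hp : ∀ g, 0 < p g) (hp1 : ∑ g : Alph m n, p g = 1)
    (r : ℝ) (hr : 0 < r)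
    (t : ℝ) (ht : 0 ≤ t) :
    ∃ h1 h2 : ℝ, 0 < h1 ∧ 0 < h2 ∧
      ∀ l : ℕ, 1 ≤ l → ∀ σ ∈ Psi a b l, ∀ h : ℕ, 1 ≤ h →
        h2 * Er a p r σ ^ t * Ih a b p r h t ≤
            (∑' ρ : LamH a b σ h, Er a p r ρ.1 ^ t) ∧
          (∑' ρ : LamH a b σ h, Er a p r ρ.1 ^ t) ≤
            h1 * Er a p r σ ^ t * Ih a b p r h t :=
  stmt12_general m n hn a b hab p hp hp1 r t ht

end

end LGQ
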